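/- The fixed point (x̃, 0) with Ψ(x̃) = 0 of the Gilet map has a pair of non-real complex conjugate eigenvalues of its Jacobian if and only if σΨ'(x̃)² > (1-μ)²/(4μ); and in that case both eigenvalues have modulus √(μ(1 + σΨ'(x̃)²)), which exceeds 1 if and only if σΨ'(x̃)² > (1-μ)/μ. -/

import Mathlib

/-!
The eigenvalues are the roots of the real quadratic `λ² - (1 + μ) λ + μ (1 + σ Ψ'(x̃)²)`.
A real quadratic `z² - b z + c` has a non-real root exactly when its discriminant `b² - 4c` is
negative; the roots are then conjugate, so each has squared modulus equal to their product `c`.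
-/

namespace Complex

variable {b c : ℝ} {z : ℂ}

theorem sq_sub_mul_add_eq_zero_iff_of_im_ne_zero (hz : z.im ≠ 0) :
    z ^ 2 - b * z + c = 0 ↔ z.re = b / 2 ∧ z.im ^ 2 = c - (b / 2) ^ 2 := by
  rw [Complex.ext_iff]
  simp only [sq, add_re, sub_re, mul_re, add_im, sub_im, mul_im, ofReal_re, ofReal_im,
    zero_re, zero_im]
  constructor
  · rintro ⟨h_re, h_im⟩
    -- the imaginary part of the equation is `(2 re z - b) im z = 0`
    have h_re_eq : z.re = b / 2 := by
      have : (2 * z.re - b) * z.im = 0 := by linear_combination h_im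
      linarith [(mul_eq_zero.1 this).resolve_right hz]
    rw [h_re_eq] at h_re
    exact ⟨h_re_eq, by linear_combination -h_re⟩
  · rintro ⟨h_re, h_im⟩
    rw [h_re]
    exact ⟨by linear_combination -h_im, by ring⟩

theorem exists_im_ne_zero_sq_sub_mul_add_eq_zero_iff :
    (∃ z : ℂ, z.im ≠ 0 ∧ z ^ 2 - b * z + c = 0) ↔ b ^ 2 < 4 * c := by
  constructor
  · rintro ⟨z, hz, hroot⟩
    obtain ⟨-, h_im⟩ := (sq_sub_mul_add_eq_zero_iff_of_im_ne_zero hz).1 hroot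
    have : 0 < z.im ^ 2 := by positivity
    linarith
  · intro hdisc
    have hpos : 0 < c - (b / 2) ^ 2 := by linarith
    have him : (⟨b / 2, √(c - (b / 2) ^ 2)⟩ : ℂ).im ≠ 0 := (Real.sqrt_pos.2 hpos).ne'
    exact ⟨_, him, (sq_sub_mul_add_eq_zero_iff_of_im_ne_zero him).2
      ⟨rfl, Real.sq_sqrt hpos.le⟩⟩

theorem norm_eq_sqrt_of_sq_sub_mul_add_eq_zero (hz : z.im ≠ 0) (hroot : z ^ 2 - b * z + c = 0) :
    ‖z‖ = √c := by
  obtain ⟨h_re, h_im⟩ := (sq_sub_mul_add_eq_zero_iff_of_im_ne_zero hz).1 hroot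
  rw [norm_def, normSq_apply, ← sq, ← sq, h_re, h_im, add_sub_cancel]

end Complex

theorem gilet_complex_eigenvalues_general
    (σ μ : ℝ) (hμ : 0 < μ)
    (d : ℝ) :
    ((∃ z : ℂ, z.im ≠ 0 ∧
        z ^ 2 - (1 + (μ : ℂ)) * z + (μ : ℂ) * (1 + (σ : ℂ) * (d : ℂ) ^ 2) = 0) ↔
      σ * d ^ 2 > (1 - μ) ^ 2 / (4 * μ)) ∧
    (∀ z : ℂ, z.im ≠ 0 →
      z ^ 2 - (1 + (μ : ℂ)) * z + (μ : ℂ) * (1 + (σ : ℂ) * (d : ℂ) ^ 2) = 0 →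
      ‖z‖ = Real.sqrt (μ * (1 + σ * d ^ 2)) ∧
        (1 < ‖z‖ ↔ σ * d ^ 2 > (1 - μ) / μ)) := by
  have hpoly : ∀ z : ℂ, z ^ 2 - (1 + (μ : ℂ)) * z + (μ : ℂ) * (1 + (σ : ℂ) * (d : ℂ) ^ 2) =
      z ^ 2 - ((1 + μ : ℝ) : ℂ) * z + ((μ * (1 + σ * d ^ 2) : ℝ) : ℂ) := by
    intro z; push_cast; ring
  simp only [hpoly, gt_iff_lt, div_lt_iff₀ (by positivity : (0 : ℝ) < 4 * μ), div_lt_iff₀ hμ]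
  refine ⟨Complex.exists_im_ne_zero_sq_sub_mul_add_eq_zero_iff.trans
    ⟨fun h => by linarith, fun h => by linarith⟩, fun z hz hroot => ?_⟩
  have hnorm := Complex.norm_eq_sqrt_of_sq_sub_mul_add_eq_zero hz hroot
  rw [hnorm, Real.lt_sqrt zero_le_one, one_pow]
  exact ⟨rfl, ⟨fun h => by linarith, fun h => by linarith⟩⟩

theorem gilet_complex_eigenvalues
    (Ψ : ℝ → ℝ) (hΨ : ContDiff ℝ 1 Ψ)
    (σ μ : ℝ) (hσ : 0 < σ) (hσ1 : σ < 1) (hμ : 0 < μ) (hμ1 : μ < 1)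
    (xt : ℝ) (hx : Ψ xt = 0) (d : ℝ) (hd : d = deriv Ψ xt) :
    ((∃ z : ℂ, z.im ≠ 0 ∧
        z ^ 2 - (1 + (μ : ℂ)) * z + (μ : ℂ) * (1 + (σ : ℂ) * (d : ℂ) ^ 2) = 0) ↔
      σ * d ^ 2 > (1 - μ) ^ 2 / (4 * μ)) ∧
    (∀ z : ℂ, z.im ≠ 0 →
      z ^ 2 - (1 + (μ : ℂ)) * z + (μ : ℂ) * (1 + (σ : ℂ) * (d : ℂ) ^ 2) = 0 →
      ‖z‖ = Real.sqrt (μ * (1 + σ * d ^ 2)) ∧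
        (1 < ‖z‖ ↔ σ * d ^ 2 > (1 - μ) / μ)) :=
  gilet_complex_eigenvalues_general σ μ hμ d
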